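/- arXiv:1602.08298 — 3 statements merged into one kernel-verified Lean document; each statement's English description precedes it below -/
import Mathlib

section
/- Let β : ℕ → ℝ be defined by log₂ β(11) = -log₂ 11 and log₂ β(i+1) = log₂(10/3) + k · log₂ β(i) for an integer k ≥ 2. Then for i* = 11 + log_k(log₂ n) (assuming log_k(log₂ n) is a positive integer), log₂ β(i*) = log₂(10/3) · (k^{log_k log₂ n} - 1)/(k - 1) - (log₂ n) · log₂ 11 ≤ (log₂ n) · (log₂(10/3) - log₂ 11) ≤ -1.7 · log₂ n. -/
/-! The recursion is affine in `log₂ β`, so it unrolls to a geometric sum. The factor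
`(k^s - 1)/(k - 1)` is at most `k^s = log₂ n`, and `log₂ (10/3) - log₂ 11 = log₂ (10/33) ≤ -1.7`
since `2^17 ≤ 3.3^10`. -/

open Real

theorem iterate_affine_eq {K : Type*} [Field K] {x : ℕ → K} {a c : K} (hc : c ≠ 1)
    (hx : ∀ i, x (i + 1) = a + c * x i) (m t : ℕ) :
    x (m + t) = a * ((c ^ t - 1) / (c - 1)) + c ^ t * x m := by
  have hc' : c - 1 ≠ 0 := sub_ne_zero.mpr hc
  induction t with
  | zero => simp
  | succ t ih =>
    rw [← add_assoc, hx, ih]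
    field_simp
    ring

theorem pow_sub_one_div_sub_one_le_pow {c : ℝ} (hc : 2 ≤ c) (t : ℕ) :
    (c ^ t - 1) / (c - 1) ≤ c ^ t := by
  have hct : 1 ≤ c ^ t := one_le_pow₀ (by linarith)
  rw [div_le_iff₀ (by linarith)]
  nlinarith

theorem logb_two_ten_thirds_sub_logb_two_eleven_le :
    logb 2 (10 / 3) - logb 2 11 ≤ -1.7 := by
  rw [← logb_div (by norm_num) (by norm_num)]
  have hpow : ((10 / 3 / 11 : ℝ)) ^ 10 ≤ ((2 : ℝ) ^ 17)⁻¹ := by norm_num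
  have hlog := logb_le_logb_of_le (b := 2) (by norm_num) (by positivity) hpow
  rw [logb_pow, logb_inv, logb_pow, logb_self_eq_one (by norm_num)] at hlog
  push_cast at hlog
  linarith

theorem stmt_1_general (n : ℝ) (k : ℕ) (s : ℕ) (β : ℕ → ℝ) (hk : 2 ≤ k)
    (hslog : ((k : ℝ)) ^ s = Real.logb 2 n)
    (hβ0 : Real.logb 2 (β 11) = - Real.logb 2 11)
    (hβ : ∀ i, Real.logb 2 (β (i + 1)) = Real.logb 2 (10 / 3) + k * Real.logb 2 (β i)) :
    Real.logb 2 (β (11 + s))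
        = Real.logb 2 (10 / 3) * (((k : ℝ) ^ s - 1) / ((k : ℝ) - 1))
          - Real.logb 2 n * Real.logb 2 11
    ∧ Real.logb 2 (10 / 3) * (((k : ℝ) ^ s - 1) / ((k : ℝ) - 1))
          - Real.logb 2 n * Real.logb 2 11
        ≤ Real.logb 2 n * (Real.logb 2 (10 / 3) - Real.logb 2 11)
    ∧ Real.logb 2 n * (Real.logb 2 (10 / 3) - Real.logb 2 11) ≤ -1.7 * Real.logb 2 n := by
  have hk2 : (2 : ℝ) ≤ k := by exact_mod_cast hk
  have hlogn : 0 ≤ logb 2 n := hslog ▸ by positivity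
  have hL : 0 ≤ logb 2 (10 / 3) := logb_nonneg (by norm_num) (by norm_num)
  refine ⟨?_, ?_, ?_⟩
  · rw [iterate_affine_eq (x := fun i => logb 2 (β i)) (by linarith) hβ, hβ0, hslog]
    ring
  · have hgeom := mul_le_mul_of_nonneg_left (pow_sub_one_div_sub_one_le_pow hk2 s) hL
    rw [← hslog]
    linarith
  · nlinarith [logb_two_ten_thirds_sub_logb_two_eleven_le]

/-- Solving the layered-induction recursion for FirstDiff[d] with m = n:
with `log₂ β 11 = -log₂ 11` and `log₂ β (i+1) = log₂(10/3) + k log₂ β i`,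
at `i* = 11 + log_k(log₂ n)` one has
`log₂ β i* = log₂(10/3) (k^{log_k log₂ n} - 1)/(k-1) - (log₂ n) log₂ 11
  ≤ (log₂ n)(log₂(10/3) - log₂ 11) ≤ -1.7 log₂ n`. -/
theorem stmt_1 (n : ℝ) (k : ℕ) (s : ℕ) (β : ℕ → ℝ) (hn : 2 ≤ n) (hk : 2 ≤ k)
    (hs : 1 ≤ s) (hslog : ((k : ℝ)) ^ s = Real.logb 2 n)
    (hβ0 : Real.logb 2 (β 11) = - Real.logb 2 11)
    (hβ : ∀ i, Real.logb 2 (β (i + 1)) = Real.logb 2 (10 / 3) + k * Real.logb 2 (β i)) :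
    Real.logb 2 (β (11 + s))
        = Real.logb 2 (10 / 3) * (((k : ℝ) ^ s - 1) / ((k : ℝ) - 1))
          - Real.logb 2 n * Real.logb 2 11
    ∧ Real.logb 2 (10 / 3) * (((k : ℝ) ^ s - 1) / ((k : ℝ) - 1))
          - Real.logb 2 n * Real.logb 2 11
        ≤ Real.logb 2 n * (Real.logb 2 (10 / 3) - Real.logb 2 11)
    ∧ Real.logb 2 n * (Real.logb 2 (10 / 3) - Real.logb 2 11) ≤ -1.7 * Real.logb 2 n :=
  stmt_1_general n k s β hk hslog hβ0 hβ
end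

section
/- Let X₁, …, X_n be independent geometric random variables with success parameters p₁, …, p_n ∈ (0,1], let p* = min_i p_i, X = ∑ X_i and μ = E[X] = ∑ 1/p_i. Then for any Λ ≥ 1, Pr(X ≥ Λμ) ≤ exp(−p*·μ·(Λ − 1 − ln Λ)). -/
/-!
Chernoff's bound with `t = p* (1 - Λ⁻¹)`. A geometric variable of parameter `p > t` has
`E e^{tX} = p e^t / (1 - (1 - p) e^t) ≤ p / (p - t)`, the inequality being `e^{-t} ≥ 1 - t`, and
Bernoulli's inequality for the exponent `p* / p ≤ 1` gives `p / (p - t) ≤ Λ ^ (p* / p)`. By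
independence `E e^{tX} ≤ Λ ^ (p* μ)`, and `e^{-tΛμ} Λ ^ (p* μ)` is the claimed bound.
-/

open MeasureTheory ProbabilityTheory Real

lemma exp_mul_sub_le_one_sub_mul_exp (p t : ℝ) : exp t * (p - t) ≤ 1 - (1 - p) * exp t := by
  have h : exp t * (1 - t) ≤ exp t * exp (-t) :=
    mul_le_mul_of_nonneg_left (by linarith [add_one_le_exp (-t)]) (exp_pos t).le
  rw [← exp_add, add_neg_cancel, exp_zero] at h
  linarith

lemma one_sub_mul_exp_lt_one {p t : ℝ} (htp : t < p) : (1 - p) * exp t < 1 := by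
  nlinarith [exp_mul_sub_le_one_sub_mul_exp p t, exp_pos t]

lemma mul_exp_div_one_sub_mul_exp_le {p t : ℝ} (hp : 0 ≤ p) (htp : t < p) :
    p * exp t / (1 - (1 - p) * exp t) ≤ p / (p - t) := by
  have hpt : 0 < p - t := by linarith
  have h := exp_mul_sub_le_one_sub_mul_exp p t
  rw [div_le_div_iff₀ (by nlinarith [exp_pos t]) hpt]
  nlinarith

lemma mul_one_sub_inv_lt {p s Λ : ℝ} (hp : 0 < p) (hsp : s ≤ p) (hΛ : 1 ≤ Λ) :
    s * (1 - Λ⁻¹) < p := by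
  have hΛinv : Λ⁻¹ ≤ 1 := inv_le_one_of_one_le₀ hΛ
  nlinarith [mul_pos hp (inv_pos.2 (zero_lt_one.trans_le hΛ))]

lemma div_sub_mul_one_sub_inv_le_rpow {p s Λ : ℝ} (hp : 0 < p) (hs : 0 ≤ s) (hsp : s ≤ p)
    (hΛ : 1 ≤ Λ) : p / (p - s * (1 - Λ⁻¹)) ≤ Λ ^ (s / p) := by
  have hΛ0 : 0 < Λ := zero_lt_one.trans_le hΛ
  have hbernoulli : Λ⁻¹ ^ (s / p) ≤ 1 - s / p * (1 - Λ⁻¹) := by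
    have := rpow_one_add_le_one_add_mul_self (s := -(1 - Λ⁻¹))
      (by linarith [inv_nonneg.2 hΛ0.le]) (div_nonneg hs hp.le) ((div_le_one hp).2 hsp)
    rwa [show 1 + -(1 - Λ⁻¹) = Λ⁻¹ by ring, mul_neg, ← sub_eq_add_neg] at this
  calc p / (p - s * (1 - Λ⁻¹)) = 1 / (1 - s / p * (1 - Λ⁻¹)) := by field_simp
    _ ≤ 1 / Λ⁻¹ ^ (s / p) :=
      one_div_le_one_div_of_le (rpow_pos_of_pos (inv_pos.2 hΛ0) _) hbernoulli
    _ = Λ ^ (s / p) := by rw [inv_rpow hΛ0.le, one_div, inv_inv]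

section Geometric

variable {Ω : Type*} [MeasurableSpace Ω] {μ : Measure Ω} {X : Ω → ℕ} {p s t Λ : ℝ}

lemma lintegral_comp_nat_eq_tsum (hX : Measurable X) (f : ℕ → ENNReal) :
    ∫⁻ ω, f (X ω) ∂μ = ∑' j, f j * μ {ω | X ω = j} := by
  rw [← lintegral_map measurable_from_top hX, lintegral_countable']
  congr! with j
  exact Measure.map_apply hX (measurableSet_singleton j)

/-- The number of trials up to and including the first success; Mathlib's `geometricMeasure`
counts the failures instead. -/
structure HasGeometricLaw (μ : Measure Ω) (X : Ω → ℕ) (p : ℝ) : Prop where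
  measure_eq_zero : μ {ω | X ω = 0} = 0
  measure_eq_succ : ∀ j : ℕ, μ {ω | X ω = j + 1} = ENNReal.ofReal ((1 - p) ^ j * p)

lemma HasGeometricLaw.of_toReal [IsProbabilityMeasure μ] (hXm : Measurable X)
    (hgeom : ∀ j : ℕ, 1 ≤ j → (μ {ω | X ω = j}).toReal = (1 - p) ^ (j - 1) * p)
    (hpos : (μ {ω | 1 ≤ X ω}).toReal = 1) : HasGeometricLaw μ X p where
  measure_eq_zero := by
    have hcompl : {ω | X ω = 0} = {ω | 1 ≤ X ω}ᶜ := by ext ω; simp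
    rw [hcompl, prob_compl_eq_zero_iff (measurableSet_le measurable_const hXm)]
    exact (ENNReal.toReal_eq_one_iff _).1 hpos
  measure_eq_succ j := by
    rw [← ENNReal.ofReal_toReal (measure_ne_top μ _), hgeom (j + 1) (Nat.le_add_left 1 j),
      Nat.add_sub_cancel]

namespace HasGeometricLaw

variable (hX : HasGeometricLaw μ X p) (hXm : Measurable X) (hp0 : 0 ≤ p) (hp1 : p ≤ 1)
include hX hXm hp0 hp1

lemma lintegral_exp_mul (ht : (1 - p) * exp t < 1) :
    ∫⁻ ω, ENNReal.ofReal (exp (t * X ω)) ∂μ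
      = ENNReal.ofReal (p * exp t / (1 - (1 - p) * exp t)) := by
  have hr0 : 0 ≤ (1 - p) * exp t := mul_nonneg (by linarith) (exp_pos t).le
  have hterm : ∀ k : ℕ, ENNReal.ofReal (exp (t * ↑(k + 1))) * μ {ω | X ω = k + 1}
      = ENNReal.ofReal (p * exp t * ((1 - p) * exp t) ^ k) := by
    intro k
    rw [hX.measure_eq_succ, ← ENNReal.ofReal_mul (exp_pos _).le, Nat.cast_succ, mul_add_one,
      exp_add, mul_comm t, exp_nat_mul]
    congr 1
    rw [mul_pow]
    ring
  rw [lintegral_comp_nat_eq_tsum (f := fun j : ℕ ↦ ENNReal.ofReal (exp (t * j))) hXm,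
    tsum_eq_zero_add' ENNReal.summable, hX.measure_eq_zero, mul_zero, zero_add]
  simp_rw [hterm]
  rw [← ENNReal.ofReal_tsum_of_nonneg (fun k ↦ by positivity)
      ((summable_geometric_of_lt_one hr0 ht).mul_left _),
    tsum_mul_left, tsum_geometric_of_lt_one hr0 ht, div_eq_mul_inv]

lemma integrable_exp_mul (ht : (1 - p) * exp t < 1) :
    Integrable (fun ω ↦ exp (t * X ω)) μ := by
  refine ⟨by fun_prop, ?_⟩
  rw [hasFiniteIntegral_iff_ofReal (ae_of_all _ fun ω ↦ (exp_pos _).le),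
    hX.lintegral_exp_mul hXm hp0 hp1 ht]
  exact ENNReal.ofReal_lt_top

lemma mgf_eq (ht : (1 - p) * exp t < 1) :
    mgf (fun ω ↦ (X ω : ℝ)) μ t = p * exp t / (1 - (1 - p) * exp t) := by
  rw [mgf, integral_eq_lintegral_of_nonneg_ae (ae_of_all _ fun ω ↦ (exp_pos _).le)
    (by fun_prop), hX.lintegral_exp_mul hXm hp0 hp1 ht, ENNReal.toReal_ofReal]
  exact div_nonneg (by positivity) (by linarith)

end HasGeometricLaw

lemma HasGeometricLaw.mgf_le_rpow (hX : HasGeometricLaw μ X p) (hXm : Measurable X)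
    (hp0 : 0 < p) (hp1 : p ≤ 1) (hs : 0 ≤ s) (hsp : s ≤ p) (hΛ : 1 ≤ Λ) :
    mgf (fun ω ↦ (X ω : ℝ)) μ (s * (1 - Λ⁻¹)) ≤ Λ ^ (s / p) := by
  have htp := mul_one_sub_inv_lt hp0 hsp hΛ
  rw [hX.mgf_eq hXm hp0.le hp1 (one_sub_mul_exp_lt_one htp)]
  exact (mul_exp_div_one_sub_mul_exp_le hp0.le htp).trans
    (div_sub_mul_one_sub_inv_le_rpow hp0 hs hsp hΛ)

end Geometric

theorem measureReal_sum_ge_le_of_hasGeometricLaw {Ω ι : Type*} [MeasurableSpace Ω] [Fintype ι]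
    {μ : Measure Ω} [IsProbabilityMeasure μ] {X : ι → Ω → ℕ} {p : ι → ℝ}
    (hXm : ∀ i, Measurable (X i)) (hindep : iIndepFun X μ)
    (hX : ∀ i, HasGeometricLaw μ (X i) (p i)) (hp0 : ∀ i, 0 < p i) (hp1 : ∀ i, p i ≤ 1)
    {s : ℝ} (hs : 0 ≤ s) (hsp : ∀ i, s ≤ p i) {Λ : ℝ} (hΛ : 1 ≤ Λ) :
    μ.real {ω | Λ * ∑ i, 1 / p i ≤ ∑ i, (X i ω : ℝ)}
      ≤ exp (-s * (∑ i, 1 / p i) * (Λ - 1 - log Λ)) := by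
  set t := s * (1 - Λ⁻¹)
  set Y : ι → Ω → ℝ := fun i ω ↦ X i ω
  have hYm : ∀ i, Measurable (Y i) := fun i ↦ measurable_from_top.comp (hXm i)
  have hYindep : iIndepFun Y μ := hindep.comp _ fun _ ↦ measurable_from_top
  have ht : 0 ≤ t := mul_nonneg hs (sub_nonneg.2 (inv_le_one_of_one_le₀ hΛ))
  have hint : ∀ i ∈ Finset.univ, Integrable (fun ω ↦ exp (t * Y i ω)) μ := fun i _ ↦
    (hX i).integrable_exp_mul (hXm i) (hp0 i).le (hp1 i)
      (one_sub_mul_exp_lt_one (mul_one_sub_inv_lt (hp0 i) (hsp i) hΛ))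
  have hchernoff := measure_ge_le_exp_mul_mgf (Λ * ∑ i, 1 / p i) ht
    (hYindep.integrable_exp_mul_sum hYm hint)
  simp only [Finset.sum_apply] at hchernoff
  calc μ.real {ω | Λ * ∑ i, 1 / p i ≤ ∑ i, (X i ω : ℝ)}
      ≤ exp (-t * (Λ * ∑ i, 1 / p i)) * ∏ i, mgf (Y i) μ t := by
        rwa [← hYindep.mgf_sum hYm]
    _ ≤ exp (-t * (Λ * ∑ i, 1 / p i)) * ∏ i, Λ ^ (s / p i) := by
        gcongr with i
        · exact fun i _ ↦ mgf_nonneg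
        · exact (hX i).mgf_le_rpow (hXm i) (hp0 i) (hp1 i) hs (hsp i) hΛ
    _ = exp (-s * (∑ i, 1 / p i) * (Λ - 1 - log Λ)) := by
        have hΛ0 : 0 < Λ := zero_lt_one.trans_le hΛ
        rw [← rpow_sum_of_pos hΛ0, rpow_def_of_pos hΛ0, ← exp_add]
        congr 1
        simp only [t, div_eq_mul_one_div s, ← Finset.mul_sum]
        field_simp
        ring

theorem stmt_5_general {Ω : Type*} [MeasurableSpace Ω] (μ : Measure Ω) [IsProbabilityMeasure μ]
    (n : ℕ) (p : Fin n → ℝ) (hp0 : ∀ i, 0 < p i) (hp1 : ∀ i, p i ≤ 1)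
    (X : Fin n → Ω → ℕ) (hmeas : ∀ i, Measurable (X i))
    (hgeom : ∀ i, ∀ j : ℕ, 1 ≤ j →
      (μ {ω | X i ω = j}).toReal = (1 - p i) ^ (j - 1) * p i)
    (hpos : ∀ i, (μ {ω | 1 ≤ X i ω}).toReal = 1)
    (hindep : ProbabilityTheory.iIndepFun X μ)
    (pstar M : ℝ) (hpstar_le : ∀ i, pstar ≤ p i)
    (hM : M = ∑ i, 1 / p i) (Λ : ℝ) (hΛ : 1 ≤ Λ) :
    (μ {ω | Λ * M ≤ (∑ i, X i ω : ℝ)}).toReal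
      ≤ Real.exp (-pstar * M * (Λ - 1 - Real.log Λ)) := by
  subst hM
  rcases le_or_gt 0 pstar with hpstar | hpstar
  · exact measureReal_sum_ge_le_of_hasGeometricLaw hmeas hindep
      (fun i ↦ .of_toReal (hmeas i) (hgeom i) (hpos i)) hp0 hp1 hpstar hpstar_le hΛ
  · have hM : 0 ≤ ∑ i, 1 / p i := Finset.sum_nonneg fun i _ ↦ (one_div_pos.2 (hp0 i)).le
    have hgap : 0 ≤ Λ - 1 - log Λ := by
      linarith [log_le_sub_one_of_pos (zero_lt_one.trans_le hΛ)]
    calc (μ {ω | Λ * ∑ i, 1 / p i ≤ (∑ i, X i ω : ℝ)}).toReal ≤ 1 := measureReal_le_one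
      _ ≤ exp (-pstar * (∑ i, 1 / p i) * (Λ - 1 - log Λ)) :=
        one_le_exp (mul_nonneg (mul_nonneg (neg_nonneg.2 hpstar.le) hM) hgap)

/-- Janson's tail bound for sums of independent geometric random variables
(Theorem 2.1 of Janson 2014): if `X₁, …, Xₙ` are independent geometric random
variables with parameters `p₁, …, pₙ ∈ (0,1]`, `p* = minᵢ pᵢ`, and
`μ = E[∑ Xᵢ] = ∑ 1/pᵢ`, then for every `Λ ≥ 1`,
`Pr(∑ Xᵢ ≥ Λ μ) ≤ exp(-p* μ (Λ - 1 - ln Λ))`. -/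
theorem stmt_5 {Ω : Type*} [MeasurableSpace Ω] (μ : Measure Ω) [IsProbabilityMeasure μ]
    (n : ℕ) (hn : 1 ≤ n) (p : Fin n → ℝ) (hp0 : ∀ i, 0 < p i) (hp1 : ∀ i, p i ≤ 1)
    (X : Fin n → Ω → ℕ) (hmeas : ∀ i, Measurable (X i))
    (hgeom : ∀ i, ∀ j : ℕ, 1 ≤ j →
      (μ {ω | X i ω = j}).toReal = (1 - p i) ^ (j - 1) * p i)
    (hpos : ∀ i, (μ {ω | 1 ≤ X i ω}).toReal = 1)
    (hindep : ProbabilityTheory.iIndepFun X μ)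
    (pstar M : ℝ) (hpstar_le : ∀ i, pstar ≤ p i) (hpstar_mem : ∃ i, p i = pstar)
    (hM : M = ∑ i, 1 / p i) (Λ : ℝ) (hΛ : 1 ≤ Λ) :
    (μ {ω | Λ * M ≤ (∑ i, X i ω : ℝ)}).toReal
      ≤ Real.exp (-pstar * M * (Λ - 1 - Real.log Λ)) :=
  stmt_5_general μ n p hp0 hp1 X hmeas hgeom hpos hindep pstar M hpstar_le hM Λ hΛ
end

section
/- If an allocation algorithm ALG places each of m balls using at most k independent uniform probes and any placement rule, then under the coupling in which Greedy[k]'s k probes extend ALG's probes, the load vector of Greedy[k] is majorized by that of ALG at every time step 0 ≤ t ≤ m. Core single-step lemma: if load vector u is majorized by v, and u is updated by adding a ball to its least loaded probed bin among k probes while v is updated by adding a ball to a probed bin (from the first w ≤ k of the same probes) of load at least the load of the bin chosen for u, then the updated u is still majorized by the updated v. -/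
/-!
Adding a ball to bin `a` of `u` and to bin `b` of `v` raises the sum of `u` over `s` by `[a ∈ s]`
and the sum of `v` over `t` by `[b ∈ t]`, so only sets `s ∋ a` need a new witness. For those,
take a set `T` of size `|s| - 1` on which `v` has maximal sum. If `b ∉ T`, then `insert b T` works,
because `u a ≤ v b` and `∑_{s \ {a}} u ≤ ∑_T v`. If `b ∈ T`, the ball added to `v` is already
counted in `T`, and exchanging `T` with a witness of size `|s|` for `s` yields an element `x ∉ T`
such that `insert x T` carries at least the old `v`-mass of that witness.
-/

/-- `Majorizes v u` : after sorting in non-increasing order, every prefix sum of `v`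
dominates the corresponding prefix sum of `u`, with equal total sums. -/
def Majorizes {n : ℕ} (v u : Fin n → ℕ) : Prop :=
  (∑ i, v i = ∑ i, u i) ∧
    ∀ s : Finset (Fin n), ∃ t : Finset (Fin n),
      t.card = s.card ∧ ∑ i ∈ s, u i ≤ ∑ i ∈ t, v i

open Finset

theorem Finset.sum_update_add_one {ι : Type*} [DecidableEq ι] (f : ι → ℕ) (x : ι) (s : Finset ι) :
    ∑ i ∈ s, Function.update f x (f x + 1) i = ∑ i ∈ s, f i + if x ∈ s then 1 else 0 := by
  have hf : Function.update f x (f x + 1) = f + Pi.single x 1 := by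
    ext i
    rcases eq_or_ne i x with rfl | hi <;> simp [*]
  rw [hf]
  simp only [Pi.add_apply, sum_add_distrib, sum_pi_single']

theorem exists_card_eq_forall_sum_le {ι : Type*} [Fintype ι] (v : ι → ℕ) {m : ℕ}
    (hm : m ≤ Fintype.card ι) :
    ∃ T : Finset ι, T.card = m ∧ ∀ t : Finset ι, t.card = m → ∑ i ∈ t, v i ≤ ∑ i ∈ T, v i := by
  have hne : (univ.powersetCard m : Finset (Finset ι)).Nonempty :=
    powersetCard_nonempty.2 (by simpa using hm)
  obtain ⟨T, hT, hmax⟩ := exists_max_image _ (fun t => ∑ i ∈ t, v i) hne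
  exact ⟨T, (mem_powersetCard.1 hT).2, fun t ht => hmax t (by simp [ht])⟩

theorem exists_notMem_sum_le_sum_insert {ι : Type*} [DecidableEq ι] (v : ι → ℕ) {T T' : Finset ι}
    (hT : ∀ t : Finset ι, t.card = T.card → ∑ i ∈ t, v i ≤ ∑ i ∈ T, v i)
    (hcard : T'.card = T.card + 1) :
    ∃ x ∉ T, ∑ i ∈ T', v i ≤ ∑ i ∈ insert x T, v i := by
  obtain ⟨x, hxT', hxT⟩ : ∃ x ∈ T', x ∉ T := not_subset.1 fun h => by
    have := card_le_card h
    omega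
  refine ⟨x, hxT, ?_⟩
  have herase := hT (T'.erase x) (by rw [card_erase_of_mem hxT', hcard, Nat.add_sub_cancel])
  rw [← add_sum_erase _ v hxT', sum_insert hxT]
  omega

theorem Majorizes.update_add_one {n : ℕ} {u v : Fin n → ℕ} (h : Majorizes v u) {a b : Fin n}
    (hab : u a ≤ v b) :
    Majorizes (Function.update v b (v b + 1)) (Function.update u a (u a + 1)) := by
  obtain ⟨hsum, hpre⟩ := h
  refine ⟨by simp only [sum_update_add_one, hsum, mem_univ], fun s => ?_⟩
  simp only [sum_update_add_one]
  by_cases ha : a ∈ s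
  swap
  · obtain ⟨t, ht, hst⟩ := hpre s
    exact ⟨t, ht, by simpa [ha] using hst.trans (Nat.le_add_right _ _)⟩
  have hs : (s.erase a).card + 1 = s.card := card_erase_add_one ha
  obtain ⟨T, hTcard, hTmax⟩ := exists_card_eq_forall_sum_le v
    ((card_le_univ _).trans' (card_erase_le (s := s) (a := a)))
  obtain ⟨t₀, ht₀, hst₀⟩ := hpre (s.erase a)
  have hrest : ∑ i ∈ s.erase a, u i ≤ ∑ i ∈ T, v i := hst₀.trans (hTmax t₀ ht₀)
  have hsplit := add_sum_erase _ u ha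
  by_cases hb : b ∈ T
  · obtain ⟨t, ht, hst⟩ := hpre s
    obtain ⟨x, hxT, hx⟩ := exists_notMem_sum_le_sum_insert v (hTcard ▸ hTmax)
      (T' := t) (by omega)
    refine ⟨insert x T, by rw [card_insert_of_notMem hxT]; omega, ?_⟩
    simp only [ha, mem_insert_of_mem hb, if_true]
    omega
  · refine ⟨insert b T, by rw [card_insert_of_notMem hb]; omega, ?_⟩
    simp only [ha, mem_insert_self, if_true, sum_insert hb]
    omega

theorem stmt_18_general {n k : ℕ} (u v : Fin n → ℕ) (probes : Fin k → Fin n)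
    (hmaj : Majorizes v u)
    (ig : Fin k)
    (ja : Fin k) (hload : u (probes ig) ≤ v (probes ja)) :
    Majorizes (Function.update v (probes ja) (v (probes ja) + 1))
      (Function.update u (probes ig) (u (probes ig) + 1)) :=
  hmaj.update_add_one hload

/-- Core single-step lemma for the lower bound (Greedy[k] is majorized by any
algorithm ALG using at most `k` independent uniform probes, under the coupling in
which Greedy[k]'s `k` probes extend ALG's `w ≤ k` probes): if the load vector `u`
(Greedy) is majorized by `v` (ALG), `u` receives a ball in its least loaded probed
bin among the `k` probes, and `v` receives a ball in one of the first `w` probed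
bins whose load is at least the load of the bin chosen for `u`, then the updated
`u` is still majorized by the updated `v`. -/
theorem stmt_18 {n k : ℕ} (hk : 0 < k) (u v : Fin n → ℕ) (probes : Fin k → Fin n)
    (w : ℕ) (hw : w ≤ k) (hmaj : Majorizes v u)
    (ig : Fin k) (hgreedy : ∀ j : Fin k, u (probes ig) ≤ u (probes j))
    (ja : Fin k) (hja : (ja : ℕ) < w) (hload : u (probes ig) ≤ v (probes ja)) :
    Majorizes (Function.update v (probes ja) (v (probes ja) + 1))
      (Function.update u (probes ig) (u (probes ig) + 1)) :=
  stmt_18_general u v probes hmaj ig ja hload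
end
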